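/- arXiv:2410.06849 — 2 statements merged into one kernel-verified Lean document; each statement's English description precedes it below -/
import Mathlib

section
/- Let B be a partial-circulant-block matrix (each block B_{ij} a k₂-partial circulant matrix of size k₂×n₂) and A a circulant-block matrix (each block A_{ij} an n₂×n₂ circulant matrix). Then Q = BA is a partial-circulant-block matrix, i.e., each block Q_{ij} = Σ_{l} B_{il} A_{lj} is a k₂-partial circulant matrix. -/
/-!
Blockwise, `Q i j = ∑ l, B i l * A l j`. If `B i l` has entries `b (t - s)` and `A l j` has
entries `a (t - s)`, then substituting `r = u + s` in `∑ r, b (r - s) * a (t - r)` shows that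
`B i l * A l j` has entries `c (t - s)` with `c` the cyclic convolution of `b` and `a`; and
partial circulant matrices are closed under sums.
-/

/-- A `k₂ × n₂` matrix is `k₂`-partial circulant if it consists of the first `k₂` rows
of a circulant matrix. -/
def IsPartialCirculant {F : Type*} {k₂ n₂ : ℕ} (M : Matrix (Fin k₂) (ZMod n₂) F) : Prop :=
  ∃ a : ZMod n₂ → F, ∀ i t, M i t = a (t - ((i : ℕ) : ZMod n₂))

/-- An `n₂ × n₂` matrix is circulant if `A s t = a (t - s)` for some vector `a`. -/
def IsCirculant {F : Type*} {n₂ : ℕ} (A : Matrix (ZMod n₂) (ZMod n₂) F) : Prop :=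
  ∃ a : ZMod n₂ → F, ∀ s t, A s t = a (t - s)

open Matrix

theorem Matrix.comp_symm_mul_apply {I J K L M N R : Type*} [Fintype J] [Fintype L]
    [AddCommMonoid R] [Mul R] (B : Matrix (I × K) (J × L) R) (A : Matrix (J × L) (M × N) R)
    (i : I) (m : M) :
    (comp I M K N R).symm (B * A) i m =
      ∑ j, (comp I J K L R).symm B i j * (comp J M L N R).symm A j m := by
  ext k n
  simp only [comp_symm_apply, mul_apply, Fintype.sum_prod_type, Matrix.sum_apply]

section Circulant

variable {R : Type*} {k n : ℕ}

theorem isPartialCirculant_zero [Zero R] : IsPartialCirculant (0 : Matrix (Fin k) (ZMod n) R) :=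
  ⟨0, fun _ _ => rfl⟩

theorem IsPartialCirculant.add [Add R] {M N : Matrix (Fin k) (ZMod n) R}
    (hM : IsPartialCirculant M) (hN : IsPartialCirculant N) : IsPartialCirculant (M + N) := by
  obtain ⟨a, ha⟩ := hM
  obtain ⟨b, hb⟩ := hN
  exact ⟨a + b, fun i t => by rw [Matrix.add_apply, ha, hb, Pi.add_apply]⟩

theorem IsPartialCirculant.sum [AddCommMonoid R] {ι : Type*} {s : Finset ι}
    {M : ι → Matrix (Fin k) (ZMod n) R} (h : ∀ l ∈ s, IsPartialCirculant (M l)) :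
    IsPartialCirculant (∑ l ∈ s, M l) :=
  Finset.sum_induction M _ (fun _ _ => IsPartialCirculant.add) isPartialCirculant_zero h

theorem IsPartialCirculant.mul_isCirculant [AddCommMonoid R] [Mul R] [NeZero n]
    {M : Matrix (Fin k) (ZMod n) R} {C : Matrix (ZMod n) (ZMod n) R}
    (hM : IsPartialCirculant M) (hC : IsCirculant C) : IsPartialCirculant (M * C) := by
  obtain ⟨b, hb⟩ := hM
  obtain ⟨a, ha⟩ := hC
  refine ⟨fun x => ∑ u, b u * a (x - u), fun i t => ?_⟩
  rw [mul_apply, ← Equiv.sum_comp (Equiv.addRight ((i : ℕ) : ZMod n))]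
  refine Finset.sum_congr rfl fun u _ => ?_
  rw [hb, ha, Equiv.coe_addRight, add_sub_cancel_right, sub_add_eq_sub_sub, sub_right_comm]

end Circulant

/-- if `B` is partial-circulant-block and `A` is circulant-block, then
every block of `Q = BA` is a `k₂`-partial circulant matrix. -/
theorem partialCirculantBlock_mul_circulantBlock {F : Type*} [Field F]
    {k₁ n₁ k₂ n₂ : ℕ} [NeZero n₂]
    (B : Matrix (Fin k₁ × Fin k₂) (Fin n₁ × ZMod n₂) F)
    (A : Matrix (Fin n₁ × ZMod n₂) (Fin n₁ × ZMod n₂) F)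
    (hB : ∀ (i : Fin k₁) (j : Fin n₁),
      IsPartialCirculant (Matrix.of fun s t => B (i, s) (j, t)))
    (hA : ∀ (i : Fin n₁) (j : Fin n₁),
      IsCirculant (Matrix.of fun s t => A (i, s) (j, t))) :
    ∀ (i : Fin k₁) (j : Fin n₁),
      IsPartialCirculant (Matrix.of fun s t => (B * A) (i, s) (j, t)) := by
  intro i j
  change IsPartialCirculant ((comp _ _ _ _ F).symm (B * A) i j)
  rw [comp_symm_mul_apply]
  exact IsPartialCirculant.sum fun l _ => (hB i l).mul_isCirculant (hA l j)
end

section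
/- Let e ∈ (F_{q^m})^n with rank weight rk_q(e) = t, and let P ∈ (F_{q^m})^{n×n'} be a matrix all of whose entries lie in an F_q-subspace U ⊆ F_{q^m} of dimension λ'. Then rk_q(eP) ≤ λ'·t, where rk_q of a vector over F_{q^m} is the dimension of the F_q-span of its coordinates. -/
/-!
Every coordinate of `e P` is a sum `∑ i, e i * P i j` and so lies in the product subspace
`span (range e) * U`. That subspace is spanned by the `t * λ'` products of basis vectors of the
two factors, so its dimension is at most `λ' * t`.
-/

open Module Pointwise

namespace Submodule

variable {R A : Type*} [Field R] [Ring A] [Algebra R A]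

theorem exists_finset_card_le_finrank_span_eq (M : Submodule R A) [FiniteDimensional R M] :
    ∃ s : Finset A, s.card ≤ finrank R M ∧ span R (s : Set A) = M := by
  classical
  let b := Module.finBasis R M
  refine ⟨Finset.univ.image (M.subtype ∘ b), Finset.card_image_le.trans_eq (by simp), ?_⟩
  rw [Finset.coe_image, Finset.coe_univ, Set.image_univ, Set.range_comp, span_image, b.span_eq,
    map_subtype_top]

theorem finrank_mul_le (M N : Submodule R A) [FiniteDimensional R M] [FiniteDimensional R N] :
    finrank R ↥(M * N) ≤ finrank R M * finrank R N := by
  classical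
  obtain ⟨s, hs, rfl⟩ := M.exists_finset_card_le_finrank_span_eq
  obtain ⟨t, ht, rfl⟩ := N.exists_finset_card_le_finrank_span_eq
  calc finrank R ↥(span R (s : Set A) * span R (t : Set A))
      = finrank R ↥(span R ((s * t : Finset A) : Set A)) := by rw [span_mul_span, Finset.coe_mul]
    _ ≤ (s * t).card := finrank_span_finset_le_card _
    _ ≤ s.card * t.card := Finset.card_mul_le
    _ ≤ _ := Nat.mul_le_mul hs ht

end Submodule

theorem Matrix.vecMul_mem_span_range_mul {R A : Type*} [CommSemiring R] [Semiring A]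
    [Algebra R A] {m n : Type*} [Fintype m] (e : m → A) (P : Matrix m n A) (U : Submodule R A)
    (hP : ∀ i j, P i j ∈ U) (j : n) :
    vecMul e P j ∈ Submodule.span R (Set.range e) * U :=
  Submodule.sum_mem _ fun i _ ↦ Submodule.mul_mem_mul (Submodule.subset_span ⟨i, rfl⟩) (hP i j)

/-- if `e` has rank weight `t` and all entries of `P` lie in an
`F_q`-subspace `U` of dimension `λ'`, then `rk_q(eP) ≤ λ'·t`. -/
theorem rank_weight_mul_subspace_matrix {Fq K : Type*} [Field Fq] [Field K]
    [Algebra Fq K] [FiniteDimensional Fq K] {n n' lam t : ℕ}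
    (e : Fin n → K) (P : Matrix (Fin n) (Fin n') K)
    (U : Submodule Fq K) (hU : Module.finrank Fq U = lam)
    (hP : ∀ i j, P i j ∈ U)
    (ht : Module.finrank Fq (Submodule.span Fq (Set.range e)) = t) :
    Module.finrank Fq (Submodule.span Fq (Set.range (Matrix.vecMul e P))) ≤ lam * t := by
  have hle : Submodule.span Fq (Set.range (Matrix.vecMul e P)) ≤
      Submodule.span Fq (Set.range e) * U :=
    Submodule.span_le.2 <| Set.range_subset_iff.2 <| Matrix.vecMul_mem_span_range_mul e P U hP
  calc _ ≤ finrank Fq ↥(Submodule.span Fq (Set.range e) * U) := Submodule.finrank_mono hle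
    _ ≤ t * lam := ht ▸ hU ▸ Submodule.finrank_mul_le _ _
    _ = lam * t := Nat.mul_comm t lam
end
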